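/- arXiv:1909.07657 — 5 statements merged into one kernel-verified Lean document; each statement's English description precedes it below -/
import Mathlib

section
/- Let c : ℝ × P → (0,∞) be a cocycle over a flow on P, and let p₀ ∈ P. Assume that every translate p₀·t, t ∈ ℝ, is recurrent at ∞ for c (i.e., for each t there exists a sequence sₙ → ∞ with c(sₙ, p₀·t) → 1). Then limsup_{t→-∞} c(t,p₀) ≤ limsup_{t→∞} c(t,p₀). -/
open Filter Topology

/-- If every translate `p₀·t` is recurrent at `∞` for the cocycle `c`, then
`limsup_{t→-∞} c(t,p₀) ≤ limsup_{t→∞} c(t,p₀)` in `[0,∞]`. -/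
theorem stmt7 {P : Type*} (σ : ℝ → P → P)
    (hσ0 : ∀ p, σ 0 p = p)
    (hσadd : ∀ s t p, σ t (σ s p) = σ (s + t) p)
    (c : ℝ → P → ℝ) (hcpos : ∀ t p, 0 < c t p)
    (hccoc : ∀ t s p, c (t + s) p = c t (σ s p) * c s p)
    (p₀ : P)
    (hrec : ∀ t : ℝ, ∃ sn : ℕ → ℝ, Tendsto sn atTop atTop ∧
      Tendsto (fun n => c (sn n) (σ t p₀)) atTop (𝓝 1)) :
    Filter.limsup (fun t => ENNReal.ofReal (c t p₀)) atBot ≤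
      Filter.limsup (fun t => ENNReal.ofReal (c t p₀)) atTop := by
  set L := Filter.limsup (fun t => ENNReal.ofReal (c t p₀)) atTop with hL
  have key : ∀ t : ℝ, ENNReal.ofReal (c t p₀) ≤ L := by
    intro t
    obtain ⟨sn, hsn, hconv⟩ := hrec t
    have hcoc : ∀ n, c (sn n + t) p₀ = c (sn n) (σ t p₀) * c t p₀ := fun n => hccoc _ _ _
    have htend : Tendsto (fun n => ENNReal.ofReal (c (sn n + t) p₀)) atTop
        (𝓝 (ENNReal.ofReal (c t p₀))) := by
      have h0 : Tendsto (fun n => c (sn n + t) p₀) atTop (𝓝 (c t p₀)) := by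
        simp_rw [hcoc]
        simpa using hconv.mul_const (c t p₀)
      exact (ENNReal.continuous_ofReal.tendsto _).comp h0
    have h1 : ENNReal.ofReal (c t p₀)
        = Filter.limsup (fun n => ENNReal.ofReal (c (sn n + t) p₀)) atTop :=
      htend.limsup_eq.symm
    rw [h1]
    have h2 : Tendsto (fun n => sn n + t) atTop atTop :=
      tendsto_atTop_add_const_right _ t hsn
    calc Filter.limsup (fun n => ENNReal.ofReal (c (sn n + t) p₀)) atTop
        = Filter.limsup (fun s => ENNReal.ofReal (c s p₀))
            (Filter.map (fun n => sn n + t) atTop) := by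
          exact Filter.limsup_comp (fun s => ENNReal.ofReal (c s p₀)) (fun n => sn n + t) atTop
      _ ≤ L := Filter.limsup_le_limsup_of_le h2
  exact Filter.limsup_le_of_le (by isBoundedDefault) (Filter.Eventually.of_forall key)
end

section
/- Let c : ℝ × P → (0,∞) be a continuous cocycle (in t) over a flow on P, and let p₀ ∈ P be such that sup_{t ≤ 0} c(t,p₀) < ∞ and every translate p₀·t, t ∈ ℝ, is recurrent at both +∞ and -∞ for c. Then limsup_{t→∞} c(t,p₀) = limsup_{t→-∞} c(t,p₀) = sup_{t ∈ ℝ} c(t,p₀) < ∞. -/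
open Filter Topology

/-- If `sup_{t≤0} c(t,p₀) < ∞` and every translate of `p₀` is recurrent at both
`+∞` and `-∞`, then `limsup_{t→∞} c = limsup_{t→-∞} c = sup_{t∈ℝ} c(t,p₀) < ∞`. -/
theorem stmt8 {P : Type*} (σ : ℝ → P → P)
    (hσ0 : ∀ p, σ 0 p = p)
    (hσadd : ∀ s t p, σ t (σ s p) = σ (s + t) p)
    (c : ℝ → P → ℝ) (hcpos : ∀ t p, 0 < c t p)
    (hccoc : ∀ t s p, c (t + s) p = c t (σ s p) * c s p)
    (hcont : ∀ p, Continuous fun t => c t p)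
    (p₀ : P)
    (hbd : ∃ M : ℝ, ∀ t ≤ (0:ℝ), c t p₀ ≤ M)
    (hrecp : ∀ s : ℝ, ∃ tn : ℕ → ℝ, Tendsto tn atTop atTop ∧
      Tendsto (fun n => c (tn n) (σ s p₀)) atTop (𝓝 1))
    (hrecm : ∀ s : ℝ, ∃ tn : ℕ → ℝ, Tendsto tn atTop atBot ∧
      Tendsto (fun n => c (tn n) (σ s p₀)) atTop (𝓝 1)) :
    BddAbove (Set.range fun t => c t p₀) ∧
      Filter.limsup (fun t => c t p₀) atTop = ⨆ t : ℝ, c t p₀ ∧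
      Filter.limsup (fun t => c t p₀) atBot = ⨆ t : ℝ, c t p₀ := by
  obtain ⟨M, hM⟩ := hbd
  -- c 0 p = 1
  have hc0 : ∀ p, c 0 p = 1 := by
    intro p
    have h := hccoc 0 0 p
    rw [hσ0, add_zero] at h
    have h1 : c 0 p * c 0 p = 1 * c 0 p := by rw [one_mul]; exact h.symm
    exact mul_right_cancel₀ (hcpos 0 p).ne' h1
  have hM1 : (1:ℝ) ≤ M := by
    have := hM 0 le_rfl; rwa [hc0] at this
  -- global bound
  have hbound : ∀ t, c t p₀ ≤ 2 * M := by
    intro t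
    rcases le_or_gt t 0 with ht | ht
    · have := hM t ht; linarith
    · obtain ⟨tn, htn, hlim⟩ := hrecm t
      have h1 : ∀ᶠ n in atTop, tn n ≤ -t := htn.eventually_le_atBot (-t)
      have h2 : ∀ᶠ n in atTop, (1:ℝ)/2 < c (tn n) (σ t p₀) :=
        hlim.eventually (eventually_gt_nhds (by norm_num))
      obtain ⟨n, hn1, hn2⟩ := (h1.and h2).exists
      have hcc := hccoc (tn n) t p₀
      have hle : c (tn n + t) p₀ ≤ M := hM _ (by linarith)
      nlinarith [hcpos t p₀, hcpos (tn n) (σ t p₀)]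
  have hbdd : BddAbove (Set.range fun t => c t p₀) := by
    refine ⟨2 * M, ?_⟩
    rintro x ⟨t, rfl⟩
    exact hbound t
  have hbu : ∀ l : Filter ℝ, l.IsBoundedUnder (· ≤ ·) (fun t => c t p₀) := by
    intro l
    exact Filter.isBoundedUnder_of ⟨2 * M, hbound⟩
  have hcbu : ∀ l : Filter ℝ, l.NeBot → l.IsCoboundedUnder (· ≤ ·) (fun t => c t p₀) := by
    intro l hl
    exact (Filter.isBoundedUnder_of ⟨0, fun t => (hcpos t p₀).le⟩ :
      _root_.Filter.IsBoundedUnder (· ≥ ·) _ _).isCoboundedUnder_le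
  -- key: for every s, c s p₀ ≤ limsup along atTop (resp. atBot)
  have key : ∀ (l : Filter ℝ) (s : ℝ) (e : ℕ → ℝ), Tendsto (fun n => e n + s) atTop l →
      Tendsto (fun n => c (e n) (σ s p₀)) atTop (𝓝 1) →
      c s p₀ ≤ Filter.limsup (fun t => c t p₀) l := by
    intro l s e he hlim
    have hg : Tendsto (fun n => c (e n + s) p₀) atTop (𝓝 (c s p₀)) := by
      have heq : (fun n => c (e n + s) p₀) = fun n => c (e n) (σ s p₀) * c s p₀ :=
        funext fun n => hccoc (e n) s p₀
      rw [heq]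
      simpa using hlim.mul_const (c s p₀)
    have h1 : c s p₀ = Filter.limsup (fun n => c (e n + s) p₀) atTop := hg.limsup_eq.symm
    have h2 : Filter.limsup (fun n => c (e n + s) p₀) atTop
        = Filter.limsup (fun t => c t p₀) (Filter.map (fun n => e n + s) atTop) :=
      Filter.limsup_comp (fun t => c t p₀) (fun n => e n + s) atTop
    rw [h1, h2]
    refine Filter.limsup_le_limsup_of_le he ?_ (hbu l)
    exact (Filter.isBoundedUnder_of ⟨0, fun t => (hcpos t p₀).le⟩ :
      _root_.Filter.IsBoundedUnder (· ≥ ·) _ _).isCoboundedUnder_le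
  have keyTop : ∀ s : ℝ, c s p₀ ≤ Filter.limsup (fun t => c t p₀) atTop := by
    intro s
    obtain ⟨tn, htn, hlim⟩ := hrecp s
    exact key atTop s tn (tendsto_atTop_add_const_right atTop s htn) hlim
  have keyBot : ∀ s : ℝ, c s p₀ ≤ Filter.limsup (fun t => c t p₀) atBot := by
    intro s
    obtain ⟨tn, htn, hlim⟩ := hrecm s
    exact key atBot s tn (tendsto_atBot_add_const_right atTop s htn) hlim
  have hle : ∀ l : Filter ℝ, l.NeBot →
      Filter.limsup (fun t => c t p₀) l ≤ ⨆ t : ℝ, c t p₀ := by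
    intro l hl
    exact Filter.limsup_le_of_le (hcbu l hl)
      (Eventually.of_forall fun t => le_ciSup hbdd t)
  refine ⟨hbdd, le_antisymm (hle atTop inferInstance) (ciSup_le keyTop),
    le_antisymm (hle atBot inferInstance) (ciSup_le keyBot)⟩
end

section
/- Let c : ℝ × P → (0,∞) be a continuous-in-t cocycle over a flow on P, and suppose p₀ ∈ P satisfies sup_{t ∈ ℝ} c(t,p₀) < ∞ and every translate p₀·t is recurrent at ∞ for c. If the supremum sup_{t ∈ ℝ} c(t,p₀) is attained at some t₀ ∈ ℝ, then sup_{t∈ℝ} c(t,p₀) = limsup_{t→∞} c(t,p₀). -/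
open Filter Topology

/-- If `sup_{t∈ℝ} c(t,p₀) < ∞`, every translate of `p₀` is recurrent at `∞`, and
the supremum is attained at `t₀`, then `sup_{t∈ℝ} c(t,p₀) = limsup_{t→∞} c(t,p₀)`. -/
theorem stmt9 {P : Type*} (σ : ℝ → P → P)
    (hσ0 : ∀ p, σ 0 p = p)
    (hσadd : ∀ s t p, σ t (σ s p) = σ (s + t) p)
    (c : ℝ → P → ℝ) (hcpos : ∀ t p, 0 < c t p)
    (hccoc : ∀ t s p, c (t + s) p = c t (σ s p) * c s p)
    (hcont : ∀ p, Continuous fun t => c t p)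
    (p₀ : P)
    (hbd : ∃ M : ℝ, ∀ t : ℝ, c t p₀ ≤ M)
    (hrec : ∀ s : ℝ, ∃ tn : ℕ → ℝ, Tendsto tn atTop atTop ∧
      Tendsto (fun n => c (tn n) (σ s p₀)) atTop (𝓝 1))
    (t₀ : ℝ) (hatt : ∀ t : ℝ, c t p₀ ≤ c t₀ p₀) :
    Filter.limsup (fun t => c t p₀) atTop = c t₀ p₀ := by
  obtain ⟨M, hM⟩ := hbd
  obtain ⟨tn, htn, hlim⟩ := hrec t₀
  have key : Tendsto (fun n => c (tn n + t₀) p₀) atTop (𝓝 (c t₀ p₀)) := by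
    have h1 : ∀ n, c (tn n + t₀) p₀ = c (tn n) (σ t₀ p₀) * c t₀ p₀ := fun n => hccoc _ _ _
    simp_rw [h1]
    simpa using hlim.mul_const (c t₀ p₀)
  have hub : limsup (fun t => c t p₀) atTop ≤ c t₀ p₀ := by
    apply limsup_le_of_le
    · exact isCoboundedUnder_le_of_le atTop (f := fun t => c t p₀) (x := 0) (fun t => (hcpos t p₀).le)
    · exact Eventually.of_forall hatt
  have hlb : c t₀ p₀ ≤ limsup (fun t => c t p₀) atTop := by
    have h1 : Tendsto (fun n => tn n + t₀) atTop atTop := tendsto_atTop_add_const_right _ _ htn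
    have h2 : limsup (fun n => c (tn n + t₀) p₀) atTop = c t₀ p₀ := key.limsup_eq
    rw [← h2]
    have : limsup (fun n => c (tn n + t₀) p₀) atTop
        = limsup (fun t => c t p₀) (map (fun n => tn n + t₀) atTop) := by
      rw [limsup_eq, limsup_eq]; rfl
    rw [this]
    exact limsup_le_limsup_of_le h1
      (isCoboundedUnder_le_of_le _ (f := fun t => c t p₀) (x := 0) (fun t => (hcpos t p₀).le))
      (isBoundedUnder_of ⟨M, fun t => hM t⟩)
  linarith
end

section
/- Let u define a monotone skew-product semiflow on an ordered Banach space X over a flow on P, and let φ(t,p) be a linear skew-product semiflow with u(t,p,z) ≤ φ(t,p)z for all z ≥ 0, t ≥ 0 (comparison of nonlinear and linear solutions). Let b be an equilibrium of u with b(p) ≥ 0, fix p₀ ∈ P, and suppose U(t) := φ(t,p₀·s)U(s) defines an entire positive trajectory of the linear semiflow with U(t) ≤ b(p₀·t) for all t ∈ ℝ. Define λ(t) = inf{λ ≥ 1 : b(p₀·t) ≤ λ·U(t)} (assumed finite). Then λ is nonincreasing on ℝ. -/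
open Filter Topology

/-- For a monotone semiflow `u` dominated by a positive linear semiflow `φ`, an
equilibrium `b ≥ 0` and an entire positive trajectory `U` of `φ` with
`U(t) ≤ b(p₀·t)`, the map `λ(t) = inf{λ ≥ 1 : b(p₀·t) ≤ λ·U(t)}` is
nonincreasing on `ℝ`. -/
theorem stmt16 {P X : Type*} [NormedAddCommGroup X] [NormedSpace ℝ X]
    [PartialOrder X]
    (hsmul : ∀ (l : ℝ) ⦃x y : X⦄, 0 ≤ l → x ≤ y → l • x ≤ l • y)
    (σ : ℝ → P → P)
    (hσ0 : ∀ p, σ 0 p = p)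
    (hσadd : ∀ s t p, σ t (σ s p) = σ (s + t) p)
    (u : ℝ → P → X → X)
    (hu0 : ∀ p z, u 0 p z = z)
    (hucoc : ∀ t s : ℝ, ∀ (p : P) (z : X), 0 ≤ t → 0 ≤ s →
      u (t + s) p z = u t (σ s p) (u s p z))
    (hmono : ∀ (t : ℝ) (p : P), 0 ≤ t → ∀ ⦃z₁ z₂ : X⦄, z₁ ≤ z₂ →
      u t p z₁ ≤ u t p z₂)
    (φ : ℝ → P → X →L[ℝ] X)
    (hφcoc : ∀ t s : ℝ, ∀ (p : P) (z : X), 0 ≤ t → 0 ≤ s →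
      φ (t + s) p z = φ t (σ s p) (φ s p z))
    (hφpos : ∀ (t : ℝ) (p : P), 0 ≤ t → ∀ ⦃z : X⦄, 0 ≤ z → 0 ≤ φ t p z)
    (hcomp : ∀ (t : ℝ) (p : P) (z : X), 0 ≤ t → 0 ≤ z → u t p z ≤ φ t p z)
    (b : P → X) (hb : ∀ p, 0 ≤ b p)
    (heq : ∀ (t : ℝ) (p : P), 0 ≤ t → u t p (b p) = b (σ t p))
    (p₀ : P) (U : ℝ → X)
    (hU : ∀ s t : ℝ, 0 ≤ t → φ t (σ s p₀) (U s) = U (s + t))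
    (hUpos : ∀ t : ℝ, 0 ≤ U t)
    (hUb : ∀ t : ℝ, U t ≤ b (σ t p₀))
    (hne : ∀ t : ℝ, {l : ℝ | 1 ≤ l ∧ b (σ t p₀) ≤ l • U t}.Nonempty) :
    ∀ s t : ℝ, s ≤ t →
      sInf {l : ℝ | 1 ≤ l ∧ b (σ t p₀) ≤ l • U t} ≤
        sInf {l : ℝ | 1 ≤ l ∧ b (σ s p₀) ≤ l • U s} := by
  intro s t hst
  apply csInf_le_csInf
  · exact ⟨1, fun l hl => hl.1⟩
  · exact hne s
  · rintro l ⟨hl1, hl2⟩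
    refine ⟨hl1, ?_⟩
    have hts : (0:ℝ) ≤ t - s := by linarith
    have hb' : b (σ t p₀) = u (t - s) (σ s p₀) (b (σ s p₀)) := by
      rw [heq _ _ hts, hσadd]
      ring_nf
    have hUs : 0 ≤ l • U s := by
      have := hsmul l (le_trans zero_le_one hl1) (hUpos s)
      simpa using this
    calc b (σ t p₀) = u (t - s) (σ s p₀) (b (σ s p₀)) := hb'
      _ ≤ u (t - s) (σ s p₀) (l • U s) := hmono _ _ hts hl2
      _ ≤ φ (t - s) (σ s p₀) (l • U s) := hcomp _ _ _ hts hUs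
      _ = l • φ (t - s) (σ s p₀) (U s) := by rw [map_smul]
      _ = l • U t := by rw [hU s (t - s) hts]; ring_nf
end

section
/- Let u define a monotone sublinear skew-product semiflow on an ordered Banach space X over a flow on P, with equilibrium b satisfying b(p) ≥ 0. Fix p₀ and suppose z₀ ∈ X satisfies (r₀ - ε)·e ≤ z₀ ≤ (r₀ + ε)·e for some e ≥ 0 in X, constants r₀ > ε > 0, where (r₀-ε)·e corresponds to a point whose forward trajectory is w(t) := u(t,p₀,(r₀-ε)e). Then for all t ≥ 0: 0 ≤ u(t,p₀,z₀) - w(t) ≤ (2ε/(r₀-ε))·w(t); in particular if w(t) ≤ b(p₀·t) with sup_t ‖b(p₀·t)‖ = m < ∞, then ‖u(t,p₀,z₀) - w(t)‖ ≤ 2εm/(r₀-ε) for all t ≥ 0. -/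
open Filter Topology

/-- Sandwiching estimate for a monotone sublinear semiflow: if
`(r₀-ε)·e ≤ z₀ ≤ (r₀+ε)·e`, then with `w(t) = u(t,p₀,(r₀-ε)·e)` one has
`0 ≤ u(t,p₀,z₀) - w(t) ≤ (2ε/(r₀-ε))·w(t)`, and if `w(t) ≤ b(p₀·t)` with
`‖b(p₀·t)‖ ≤ m` then `‖u(t,p₀,z₀) - w(t)‖ ≤ 2εm/(r₀-ε)`. -/
theorem stmt19 {P X : Type*} [NormedAddCommGroup X] [NormedSpace ℝ X]
    [PartialOrder X] [CovariantClass X X (· + ·) (· ≤ ·)]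
    (hsmul : ∀ (l : ℝ) ⦃x y : X⦄, 0 ≤ l → x ≤ y → l • x ≤ l • y)
    (hnorm : ∀ ⦃x y : X⦄, 0 ≤ x → x ≤ y → ‖x‖ ≤ ‖y‖)
    (σ : ℝ → P → P)
    (hσ0 : ∀ p, σ 0 p = p)
    (hσadd : ∀ s t p, σ t (σ s p) = σ (s + t) p)
    (u : ℝ → P → X → X)
    (hu0 : ∀ p z, u 0 p z = z)
    (hucoc : ∀ t s : ℝ, ∀ (p : P) (z : X), 0 ≤ t → 0 ≤ s →
      u (t + s) p z = u t (σ s p) (u s p z))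
    (hmono : ∀ (t : ℝ) (p : P), 0 ≤ t → ∀ ⦃z₁ z₂ : X⦄, z₁ ≤ z₂ →
      u t p z₁ ≤ u t p z₂)
    (hsub : ∀ (t : ℝ) (p : P) (l : ℝ) (z : X), 0 ≤ t → 0 ≤ z → 1 ≤ l →
      u t p (l • z) ≤ l • u t p z)
    (b : P → X) (hb : ∀ p, 0 ≤ b p)
    (heq : ∀ (t : ℝ) (p : P), 0 ≤ t → u t p (b p) = b (σ t p))
    (p₀ : P) (e : X) (he : 0 ≤ e)
    (r₀ ε : ℝ) (hε : 0 < ε) (hεr : ε < r₀)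
    (z₀ : X) (hz₁ : (r₀ - ε) • e ≤ z₀) (hz₂ : z₀ ≤ (r₀ + ε) • e)
    (m : ℝ)
    (hwb : ∀ t : ℝ, 0 ≤ t → u t p₀ ((r₀ - ε) • e) ≤ b (σ t p₀))
    (hm : ∀ t : ℝ, 0 ≤ t → ‖b (σ t p₀)‖ ≤ m) :
    ∀ t : ℝ, 0 ≤ t →
      0 ≤ u t p₀ z₀ - u t p₀ ((r₀ - ε) • e) ∧
      u t p₀ z₀ - u t p₀ ((r₀ - ε) • e) ≤
        ((2 * ε) / (r₀ - ε)) • u t p₀ ((r₀ - ε) • e) ∧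
      ‖u t p₀ z₀ - u t p₀ ((r₀ - ε) • e)‖ ≤ 2 * ε * m / (r₀ - ε) := by

  intro t ht
  have hre : (0:ℝ) < r₀ - ε := by linarith
  have hc : (0:ℝ) ≤ 2 * ε / (r₀ - ε) := by positivity
  have hw0 : (0:X) ≤ (r₀ - ε) • e := by
    have := hsmul (r₀ - ε) (le_of_lt hre) he
    simpa using this
  -- lower bound
  have hlow : u t p₀ ((r₀ - ε) • e) ≤ u t p₀ z₀ := hmono t p₀ ht hz₁
  have h1 : 0 ≤ u t p₀ z₀ - u t p₀ ((r₀ - ε) • e) := sub_nonneg.mpr hlow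
  -- upper bound via sublinearity
  have hl1 : (1:ℝ) ≤ (r₀ + ε) / (r₀ - ε) := by
    rw [le_div_iff₀ hre]; linarith
  have hsm : ((r₀ + ε) / (r₀ - ε)) • ((r₀ - ε) • e) = (r₀ + ε) • e := by
    rw [smul_smul, div_mul_cancel₀]
    exact ne_of_gt hre
  have hup : u t p₀ z₀ ≤ ((r₀ + ε) / (r₀ - ε)) • u t p₀ ((r₀ - ε) • e) := by
    calc u t p₀ z₀ ≤ u t p₀ ((r₀ + ε) • e) := hmono t p₀ ht hz₂
      _ = u t p₀ (((r₀ + ε) / (r₀ - ε)) • ((r₀ - ε) • e)) := by rw [hsm]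
      _ ≤ ((r₀ + ε) / (r₀ - ε)) • u t p₀ ((r₀ - ε) • e) :=
          hsub t p₀ _ _ ht hw0 hl1
  have hco : ((r₀ + ε) / (r₀ - ε)) • u t p₀ ((r₀ - ε) • e)
      - u t p₀ ((r₀ - ε) • e)
      = ((2 * ε) / (r₀ - ε)) • u t p₀ ((r₀ - ε) • e) := by
    nth_rewrite 2 [← one_smul ℝ (u t p₀ ((r₀ - ε) • e))]
    rw [← sub_smul]
    congr 1
    field_simp
    ring
  have h2 : u t p₀ z₀ - u t p₀ ((r₀ - ε) • e) ≤
      ((2 * ε) / (r₀ - ε)) • u t p₀ ((r₀ - ε) • e) := by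
    rw [← hco]
    exact sub_le_sub_right hup _
  refine ⟨h1, h2, ?_⟩
  -- norm bound
  have h3 : ((2 * ε) / (r₀ - ε)) • u t p₀ ((r₀ - ε) • e) ≤
      ((2 * ε) / (r₀ - ε)) • b (σ t p₀) := hsmul _ hc (hwb t ht)
  have h4 : ‖u t p₀ z₀ - u t p₀ ((r₀ - ε) • e)‖ ≤
      ‖((2 * ε) / (r₀ - ε)) • b (σ t p₀)‖ := hnorm h1 (h2.trans h3)
  calc ‖u t p₀ z₀ - u t p₀ ((r₀ - ε) • e)‖
      ≤ ‖((2 * ε) / (r₀ - ε)) • b (σ t p₀)‖ := h4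
    _ = (2 * ε / (r₀ - ε)) * ‖b (σ t p₀)‖ := by
        rw [norm_smul, Real.norm_of_nonneg hc]
    _ ≤ (2 * ε / (r₀ - ε)) * m := by
        exact mul_le_mul_of_nonneg_left (hm t ht) hc
    _ = 2 * ε * m / (r₀ - ε) := by ring
end
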